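/- Let C ≥ 2 and let ℓ : Δ^{C−1} → ℝ^C be a proper loss such that ℓ ∘ Π^{-1} is differentiable on the interior of Δ̃^{C−1}, with ℓ_{−C} the vector of the first C−1 partial losses and ℓ_C the last partial loss. Define the projected conditional Bayes risk L̲̃(p̃) = L(Π^{-1}(p̃), Π^{-1}(p̃)) where L(p,q) = Σ_{i=1}^C p_i ℓ_i(q). Then for every p̃ in the interior of Δ̃^{C−1}, L̲̃ is differentiable at p̃ with gradient ∇L̲̃(p̃) = (ℓ_{−C} ∘ Π^{-1})(p̃) − ((ℓ_C ∘ Π^{-1})(p̃)) · 1_{C−1}, where 1_{C−1} ∈ ℝ^{C−1} is the all-ones vector. -/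

import Mathlib

noncomputable section

/-- The probability simplex `Δ^C ⊆ ℝ^{d+1}` (here `C = d+1`). -/
def simplex (n : ℕ) : Set (Fin n → ℝ) :=
  {p | (∀ i, 0 ≤ p i) ∧ ∑ i, p i = 1}

/-- The interior of the projected probability simplex `Δ̃^{C-1} ⊆ ℝ^{C-1}` (here `C-1 = d`). -/
def projInterior (d : ℕ) : Set (Fin d → ℝ) :=
  {p | (∀ i, 0 < p i) ∧ ∑ i, p i < 1}

/-- The inverse projection `Π⁻¹ : Δ̃^{C-1} → Δ^{C-1}`,
`p̃ ↦ (p̃₁, …, p̃_{C-1}, 1 - ∑ i, p̃ i)`. -/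
def piInv (d : ℕ) (p : Fin d → ℝ) : Fin (d + 1) → ℝ :=
  Fin.snoc p (1 - ∑ i, p i)

/-- The conditional risk `L(p,q) = ∑ i, p i * ℓ_i(q)` of a loss `ℓ`. -/
def condRisk {n : ℕ} (ℓ : (Fin n → ℝ) → (Fin n → ℝ)) (p q : Fin n → ℝ) : ℝ :=
  ∑ i, p i * ℓ q i

/-- A loss is proper if `L(p,p) ≤ L(p,q)` on the simplex. -/
def Proper {n : ℕ} (ℓ : (Fin n → ℝ) → (Fin n → ℝ)) : Prop :=
  ∀ p ∈ simplex n, ∀ q ∈ simplex n, condRisk ℓ p p ≤ condRisk ℓ p q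

/-- The composition `ℓ ∘ Π⁻¹ : ℝ^{C-1} → ℝ^C`. -/
def lossComp (d : ℕ) (ℓ : (Fin (d + 1) → ℝ) → (Fin (d + 1) → ℝ)) :
    (Fin d → ℝ) → (Fin (d + 1) → ℝ) :=
  fun x => ℓ (piInv d x)

/-- The projected conditional Bayes risk `L̲̃(p̃) = L(Π⁻¹ p̃, Π⁻¹ p̃)`. -/
def projBayes (d : ℕ) (ℓ : (Fin (d + 1) → ℝ) → (Fin (d + 1) → ℝ)) :
    (Fin d → ℝ) → ℝ :=
  fun x => condRisk ℓ (piInv d x) (piInv d x)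

/-- The gradient `∇L̲̃` of the projected conditional Bayes risk. -/
def gradPB (d : ℕ) (ℓ : (Fin (d + 1) → ℝ) → (Fin (d + 1) → ℝ)) :
    (Fin d → ℝ) → (Fin d → ℝ) :=
  fun x i => fderiv ℝ (projBayes d ℓ) x (Pi.single i 1)

/-- The Hessian `H_{L̲̃}(x) i j = ∂_j ∂_i L̲̃ (x)` of the projected conditional Bayes risk. -/
def hessPB (d : ℕ) (ℓ : (Fin (d + 1) → ℝ) → (Fin (d + 1) → ℝ))
    (x : Fin d → ℝ) (i j : Fin d) : ℝ :=
  fderiv ℝ (gradPB d ℓ) x (Pi.single j 1) i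

/-- The canonical link `ψ̃ = -∇L̲̃`. -/
def canLink (d : ℕ) (ℓ : (Fin (d + 1) → ℝ) → (Fin (d + 1) → ℝ)) :
    (Fin d → ℝ) → (Fin d → ℝ) :=
  fun x i => -(gradPB d ℓ x i)

end


/-! Write `L̲̃(p̃) = L(Π⁻¹ p̃, Π⁻¹ p̃)` and differentiate both slots. By properness,
`q ↦ L(Π⁻¹ p̃, Π⁻¹ q)` has a minimum at `q = p̃`, so the derivative through the second slot
vanishes (envelope argument). The first slot enters linearly through the affine map `Π⁻¹`,
whose linear part is `v ↦ (v, -∑ v)`; pairing `ℓ(Π⁻¹ p̃)` with it gives `ℓᵢ - ℓ_C`. -/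

open Finset ContinuousLinearMap

theorem isOpen_projInterior (d : ℕ) : IsOpen (projInterior d) := by
  have h : projInterior d = (⋂ i, {p | 0 < p i}) ∩ {p | ∑ i, p i < 1} := by
    ext p; simp [projInterior]
  rw [h]
  exact (isOpen_iInter_of_finite fun i => isOpen_lt continuous_const (continuous_apply i)).inter
    (isOpen_lt (continuous_finsetSum _ fun i _ => continuous_apply i) continuous_const)

theorem piInv_mem_simplex {d : ℕ} {p : Fin d → ℝ} (hp : p ∈ projInterior d) :
    piInv d p ∈ simplex (d + 1) := by
  refine ⟨fun k => Fin.lastCases ?_ (fun j => ?_) k, by simp [piInv, Fin.sum_univ_castSucc]⟩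
  · simpa [piInv] using hp.2.le
  · simpa [piInv] using (hp.1 j).le

def piInvLinear (d : ℕ) : (Fin d → ℝ) →L[ℝ] (Fin (d + 1) → ℝ) :=
  ContinuousLinearMap.pi (Fin.snoc (α := fun _ => (Fin d → ℝ) →L[ℝ] ℝ) proj (-∑ j, proj j))

theorem piInvLinear_apply (d : ℕ) (v : Fin d → ℝ) :
    piInvLinear d v = Fin.snoc v (-∑ j, v j) := by
  ext k
  refine Fin.lastCases ?_ (fun j => ?_) k <;> simp [piInvLinear]

theorem piInv_eq_add (d : ℕ) (p : Fin d → ℝ) :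
    piInv d p = piInv d 0 + piInvLinear d p := by
  ext k
  refine Fin.lastCases ?_ (fun j => ?_) k <;> simp [piInv, piInvLinear_apply, sub_eq_add_neg]

theorem hasFDerivAt_piInv (d : ℕ) (p : Fin d → ℝ) :
    HasFDerivAt (piInv d) (piInvLinear d) p := by
  rw [funext (piInv_eq_add d)]
  exact (piInvLinear d).hasFDerivAt.const_add _

theorem HasFDerivAt.sum_mul_apply {ι E : Type*} [Fintype ι] [NormedAddCommGroup E]
    [NormedSpace ℝ E] {p q : E → ι → ℝ} {p' q' : E →L[ℝ] ι → ℝ} {x : E}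
    (hp : HasFDerivAt p p' x) (hq : HasFDerivAt q q' x) :
    HasFDerivAt (fun y => ∑ i, p y i * q y i)
      (∑ i, (p x i • (proj i).comp q' + q x i • (proj i).comp p')) x :=
  HasFDerivAt.fun_sum fun i _ => (hasFDerivAt_pi'.1 hp i).mul (hasFDerivAt_pi'.1 hq i)

theorem Proper.sum_smul_fderiv_lossComp_eq_zero {d : ℕ}
    {ℓ : (Fin (d + 1) → ℝ) → (Fin (d + 1) → ℝ)} (hℓ : Proper ℓ) {p : Fin d → ℝ}
    (hp : p ∈ projInterior d) {L' : (Fin d → ℝ) →L[ℝ] (Fin (d + 1) → ℝ)}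
    (hL : HasFDerivAt (lossComp d ℓ) L' p) :
    ∑ i, piInv d p i • (proj i).comp L' = 0 := by
  have hmin : IsLocalMin (fun q => ∑ i, piInv d p i * lossComp d ℓ q i) p :=
    Filter.eventually_of_mem ((isOpen_projInterior d).mem_nhds hp) fun q hq =>
      hℓ _ (piInv_mem_simplex hp) _ (piInv_mem_simplex hq)
  exact hmin.hasFDerivAt_eq_zero
    (HasFDerivAt.fun_sum fun i _ => (hasFDerivAt_pi'.1 hL i).const_mul _)

theorem stmt_5_general (d : ℕ)
    (ℓ : (Fin (d + 1) → ℝ) → (Fin (d + 1) → ℝ)) (hproper : Proper ℓ)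
    (hdiff : ∀ pt ∈ projInterior d, DifferentiableAt ℝ (lossComp d ℓ) pt) :
    ∀ pt ∈ projInterior d,
      DifferentiableAt ℝ (projBayes d ℓ) pt ∧
      ∀ i : Fin d,
        gradPB d ℓ pt i = ℓ (piInv d pt) i.castSucc - ℓ (piInv d pt) (Fin.last d) := by
  intro pt hpt
  obtain ⟨L', hL⟩ := hdiff pt hpt
  have hPB : HasFDerivAt (projBayes d ℓ)
      (∑ k, ℓ (piInv d pt) k • (proj k).comp (piInvLinear d)) pt := by
    have h := (hasFDerivAt_piInv d pt).sum_mul_apply hL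
    rwa [sum_add_distrib, hproper.sum_smul_fderiv_lossComp_eq_zero hpt hL, zero_add] at h
  refine ⟨hPB.differentiableAt, fun i => ?_⟩
  simp [gradPB, hPB.fderiv, piInvLinear_apply, Fin.sum_univ_castSucc, Pi.single_apply,
    sub_eq_add_neg]

/-- For a proper loss with `ℓ ∘ Π⁻¹` differentiable on the interior of the projected
simplex, the projected conditional Bayes risk `L̲̃` is differentiable there with gradient
`∇L̲̃(pt) = (ℓ₋C ∘ Π⁻¹)(pt) - ((ℓ_C ∘ Π⁻¹)(pt)) · 1_{C-1}`. -/
theorem stmt_5 (d : ℕ) (hd : 1 ≤ d)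
    (ℓ : (Fin (d + 1) → ℝ) → (Fin (d + 1) → ℝ)) (hproper : Proper ℓ)
    (hdiff : ∀ pt ∈ projInterior d, DifferentiableAt ℝ (lossComp d ℓ) pt) :
    ∀ pt ∈ projInterior d,
      DifferentiableAt ℝ (projBayes d ℓ) pt ∧
      ∀ i : Fin d,
        gradPB d ℓ pt i = ℓ (piInv d pt) i.castSucc - ℓ (piInv d pt) (Fin.last d) :=
  stmt_5_general d ℓ hproper hdiff
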